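/- arXiv:1808.00710 — 3 statements merged into one kernel-verified Lean document; each statement's English description precedes it below -/
import Mathlib

section
/- For first-order formulas ψ₁, ψ₂ in Team Semantics and a variable v occurring free in ψ₁ but not occurring in ψ₂, the formulas (∃v ψ₁) ∨ ψ₂ and ∃v (ψ₁ ∨ ψ₂) are logically equivalent: for all models M and teams X with suitable domain, M ⊨_X (∃v ψ₁) ∨ ψ₂ iff M ⊨_X ∃v (ψ₁ ∨ ψ₂). -/
/-!
Team semantics of first-order formulas is local: satisfaction depends only on the values the
assignments take on the free variables. Hence it is downward closed, and a formula in which `v`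
does not occur cannot tell a team apart from any team obtained by reassigning `v`.

If `X = Y ∪ Z` with `Y ⊨ ∃v ψ₁` via `H` and `Z ⊨ ψ₂`, then `X ⊨ ∃v (ψ₁ ∨ ψ₂)` by choosing `H` on
`Y` and keeping the current value of `v` on `Z`. Conversely, if `X[H/v] = Y ∪ Z`, split `X` by
whether some chosen value of `v` lands the assignment in `Y` or in `Z`: the first part satisfies
`∃v ψ₁` by restricting `H`, and the second part satisfies `ψ₂` by locality, since its
assignments agree off `v` with members of `Z`.
-/

/-- A relational first-order signature. -/
structure Signature where
  RelSym : Type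
  arity : RelSym → ℕ

/-- First-order formulas in negation normal form over signature `σ` and variables `V`. -/
inductive Formula (σ : Signature) (V : Type) : Type
  | rel (r : σ.RelSym) (ts : Fin (σ.arity r) → V)
  | nrel (r : σ.RelSym) (ts : Fin (σ.arity r) → V)
  | eq (v w : V)
  | neq (v w : V)
  | and (φ ψ : Formula σ V)
  | or (φ ψ : Formula σ V)
  | ex (v : V) (φ : Formula σ V)
  | all (v : V) (φ : Formula σ V)

/-- A first-order structure with domain `M`. -/
structure Struc (σ : Signature) (M : Type) where
  interp : ∀ r : σ.RelSym, (Fin (σ.arity r) → M) → Prop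

/-- Free variables of a formula. -/
def Formula.freeVars {σ : Signature} {V : Type} : Formula σ V → Set V
  | .rel _ ts => Set.range ts
  | .nrel _ ts => Set.range ts
  | .eq v w => {v, w}
  | .neq v w => {v, w}
  | .and φ ψ => φ.freeVars ∪ ψ.freeVars
  | .or φ ψ => φ.freeVars ∪ ψ.freeVars
  | .ex v φ => φ.freeVars \ {v}
  | .all v φ => φ.freeVars \ {v}

/-- All variables (free or bound) occurring in a formula. -/
def Formula.vars {σ : Signature} {V : Type} : Formula σ V → Set V
  | .rel _ ts => Set.range ts
  | .nrel _ ts => Set.range ts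
  | .eq v w => {v, w}
  | .neq v w => {v, w}
  | .and φ ψ => φ.vars ∪ ψ.vars
  | .or φ ψ => φ.vars ∪ ψ.vars
  | .ex v φ => insert v φ.vars
  | .all v φ => insert v φ.vars

/-- Tarskian satisfaction of a formula by a single assignment. -/
def Tarski {σ : Signature} {V M : Type} [DecidableEq V] (𝕄 : Struc σ M) :
    Formula σ V → (V → M) → Prop
  | .rel r ts, s => 𝕄.interp r (fun i => s (ts i))
  | .nrel r ts, s => ¬ 𝕄.interp r (fun i => s (ts i))
  | .eq v w, s => s v = s w
  | .neq v w, s => s v ≠ s w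
  | .and φ ψ, s => Tarski 𝕄 φ s ∧ Tarski 𝕄 ψ s
  | .or φ ψ, s => Tarski 𝕄 φ s ∨ Tarski 𝕄 ψ s
  | .ex v φ, s => ∃ m : M, Tarski 𝕄 φ (Function.update s v m)
  | .all v φ, s => ∀ m : M, Tarski 𝕄 φ (Function.update s v m)

/-- Supplementation `X[H/v]` of a team. -/
def supplement {V M : Type} [DecidableEq V] (X : Set (V → M))
    (H : (V → M) → Set M) (v : V) : Set (V → M) :=
  {t | ∃ s ∈ X, ∃ m ∈ H s, t = Function.update s v m}

/-- Duplication `X[M/v]` of a team. -/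
def duplicate {V M : Type} [DecidableEq V] (X : Set (V → M)) (v : V) : Set (V → M) :=
  {t | ∃ s ∈ X, ∃ m : M, t = Function.update s v m}

/-- Team Semantics satisfaction. -/
def TeamSat {σ : Signature} {V M : Type} [DecidableEq V] (𝕄 : Struc σ M) :
    Formula σ V → Set (V → M) → Prop
  | .rel r ts, X => ∀ s ∈ X, 𝕄.interp r (fun i => s (ts i))
  | .nrel r ts, X => ∀ s ∈ X, ¬ 𝕄.interp r (fun i => s (ts i))
  | .eq v w, X => ∀ s ∈ X, s v = s w
  | .neq v w, X => ∀ s ∈ X, s v ≠ s w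
  | .and φ ψ, X => TeamSat 𝕄 φ X ∧ TeamSat 𝕄 ψ X
  | .or φ ψ, X => ∃ Y Z, X = Y ∪ Z ∧ TeamSat 𝕄 φ Y ∧ TeamSat 𝕄 ψ Z
  | .ex v φ, X => ∃ H : (V → M) → Set M,
      (∀ s ∈ X, (H s).Nonempty) ∧ TeamSat 𝕄 φ (supplement X H v)
  | .all v φ, X => TeamSat 𝕄 φ (duplicate X v)

open Function Set

theorem Formula.freeVars_subset_vars {σ : Signature} {V : Type} (ψ : Formula σ V) :
    ψ.freeVars ⊆ ψ.vars := by
  induction ψ with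
  | rel | nrel | eq | neq => exact subset_rfl
  | and φ ψ ihφ ihψ | or φ ψ ihφ ihψ => exact union_subset_union ihφ ihψ
  | ex u φ ih | all u φ ih => exact sdiff_subset.trans (ih.trans (subset_insert u _))

variable {σ : Signature} {V M : Type} [DecidableEq V]

theorem eqOn_update_of_eqOn_diff {s t : V → M} {W : Set V} {u : V}
    (h : EqOn s t (W \ {u})) (m : M) : EqOn (update s u m) (update t u m) W := by
  intro w hw
  by_cases hwu : w = u
  · subst hwu; simp
  · simp only [update_of_ne hwu, h ⟨hw, hwu⟩]

theorem TeamSat.of_forall_exists_eqOn (𝕄 : Struc σ M) {ψ : Formula σ V} {X Y : Set (V → M)}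
    (hYX : ∀ t ∈ Y, ∃ s ∈ X, EqOn s t ψ.freeVars) (h : TeamSat 𝕄 ψ X) : TeamSat 𝕄 ψ Y := by
  induction ψ generalizing X Y with
  | rel r ts | nrel r ts =>
    intro t ht
    obtain ⟨s, hs, hst⟩ := hYX t ht
    have hargs : (fun i => t (ts i)) = fun i => s (ts i) :=
      funext fun i => (hst ⟨i, rfl⟩).symm
    simpa only [hargs] using h s hs
  | eq a b | neq a b =>
    intro t ht
    obtain ⟨s, hs, hst⟩ := hYX t ht
    rw [← hst (by simp [Formula.freeVars]), ← hst (by simp [Formula.freeVars])]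
    exact h s hs
  | and φ ψ ihφ ihψ =>
    refine ⟨ihφ (fun t ht => ?_) h.1, ihψ (fun t ht => ?_) h.2⟩ <;>
    · obtain ⟨s, hs, hst⟩ := hYX t ht
      exact ⟨s, hs, hst.mono (by simp [Formula.freeVars])⟩
  | or φ ψ ihφ ihψ =>
    obtain ⟨X₁, X₂, rfl, h₁, h₂⟩ := h
    refine ⟨{t ∈ Y | ∃ s ∈ X₁, EqOn s t (φ.or ψ).freeVars},
      {t ∈ Y | ∃ s ∈ X₂, EqOn s t (φ.or ψ).freeVars}, ?_, ihφ ?_ h₁, ihψ ?_ h₂⟩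
    · ext t
      refine ⟨fun ht => ?_, fun ht => ht.elim (·.1) (·.1)⟩
      obtain ⟨s, hs | hs, hst⟩ := hYX t ht
      exacts [Or.inl ⟨ht, s, hs, hst⟩, Or.inr ⟨ht, s, hs, hst⟩]
    · rintro t ⟨-, s, hs, hst⟩
      exact ⟨s, hs, hst.mono subset_union_left⟩
    · rintro t ⟨-, s, hs, hst⟩
      exact ⟨s, hs, hst.mono subset_union_right⟩
  | ex u φ ih =>
    obtain ⟨H, hne, hsat⟩ := h
    refine ⟨fun t => {m | ∃ s ∈ X, EqOn s t (φ.ex u).freeVars ∧ m ∈ H s}, ?_, ih ?_ hsat⟩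
    · intro t ht
      obtain ⟨s, hs, hst⟩ := hYX t ht
      obtain ⟨m, hm⟩ := hne s hs
      exact ⟨m, s, hs, hst, hm⟩
    · rintro _ ⟨t, -, m, ⟨s, hs, hst, hm⟩, rfl⟩
      exact ⟨update s u m, ⟨s, hs, m, hm, rfl⟩, eqOn_update_of_eqOn_diff hst m⟩
  | all u φ ih =>
    refine ih ?_ h
    rintro _ ⟨t, ht, m, rfl⟩
    obtain ⟨s, hs, hst⟩ := hYX t ht
    exact ⟨update s u m, ⟨s, hs, m, rfl⟩, eqOn_update_of_eqOn_diff hst m⟩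

theorem TeamSat.mono (𝕄 : Struc σ M) {ψ : Formula σ V} {X Y : Set (V → M)} (hYX : Y ⊆ X)
    (h : TeamSat 𝕄 ψ X) : TeamSat 𝕄 ψ Y :=
  h.of_forall_exists_eqOn 𝕄 fun t ht => ⟨t, hYX ht, eqOn_refl t _⟩

theorem TeamSat.or_of_subset_union (𝕄 : Struc σ M) {φ ψ : Formula σ V} {X Y Z : Set (V → M)}
    (hX : X ⊆ Y ∪ Z) (hY : TeamSat 𝕄 φ Y) (hZ : TeamSat 𝕄 ψ Z) : TeamSat 𝕄 (φ.or ψ) X :=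
  ⟨X ∩ Y, X ∩ Z, by rw [← inter_union_distrib_left, inter_eq_left.2 hX],
    hY.mono 𝕄 inter_subset_right, hZ.mono 𝕄 inter_subset_right⟩

theorem TeamSat.ex_or_pull_mp (𝕄 : Struc σ M) {ψ₁ ψ₂ : Formula σ V} {v : V} {X : Set (V → M)}
    (h : TeamSat 𝕄 ((ψ₁.ex v).or ψ₂) X) : TeamSat 𝕄 ((ψ₁.or ψ₂).ex v) X := by
  obtain ⟨Y, Z, rfl, ⟨H, hne, hY⟩, hZ⟩ := h
  refine ⟨fun s => {m | s ∈ Y ∧ m ∈ H s ∨ s ∈ Z ∧ m = s v}, ?_, hY.or_of_subset_union 𝕄 ?_ hZ⟩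
  · rintro s (hs | hs)
    · exact (hne s hs).imp fun m hm => Or.inl ⟨hs, hm⟩
    · exact ⟨s v, Or.inr ⟨hs, rfl⟩⟩
  · rintro _ ⟨s, -, m, ⟨hs, hm⟩ | ⟨hs, rfl⟩, rfl⟩
    · exact Or.inl ⟨s, hs, m, hm, rfl⟩
    · exact Or.inr (by rwa [update_eq_self])

theorem TeamSat.ex_or_pull_mpr (𝕄 : Struc σ M) {ψ₁ ψ₂ : Formula σ V} {v : V} {X : Set (V → M)}
    (hv : v ∉ ψ₂.freeVars) (h : TeamSat 𝕄 ((ψ₁.or ψ₂).ex v) X) :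
    TeamSat 𝕄 ((ψ₁.ex v).or ψ₂) X := by
  obtain ⟨H, hne, Y, Z, hsplit, hY, hZ⟩ := h
  refine TeamSat.or_of_subset_union 𝕄 (Y := {s | ∃ m ∈ H s, update s v m ∈ Y})
    (Z := {s | ∃ m ∈ H s, update s v m ∈ Z}) (fun s hs => ?_) ?_ ?_
  · obtain ⟨m, hm⟩ := hne s hs
    have hYZ : update s v m ∈ Y ∪ Z := hsplit ▸ ⟨s, hs, m, hm, rfl⟩
    exact hYZ.imp (⟨m, hm, ·⟩) (⟨m, hm, ·⟩)
  · refine ⟨fun s => {m ∈ H s | update s v m ∈ Y}, fun s hs => hs, hY.mono 𝕄 ?_⟩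
    rintro _ ⟨s, -, m, ⟨-, hm⟩, rfl⟩
    exact hm
  · refine hZ.of_forall_exists_eqOn 𝕄 fun s ⟨m, _, hm⟩ => ⟨update s v m, hm, fun w hw => ?_⟩
    have hwv : w ≠ v := by rintro rfl; exact hv hw
    exact update_of_ne hwv m s

theorem ex_or_pull_general {σ : Signature} {V M : Type} [DecidableEq V]
    (𝕄 : Struc σ M) (ψ₁ ψ₂ : Formula σ V) (v : V)
    (hv2 : v ∉ ψ₂.vars) (X : Set (V → M)) :
    TeamSat 𝕄 ((ψ₁.ex v).or ψ₂) X ↔ TeamSat 𝕄 ((ψ₁.or ψ₂).ex v) X :=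
  ⟨TeamSat.ex_or_pull_mp 𝕄,
    TeamSat.ex_or_pull_mpr 𝕄 fun hv => hv2 (ψ₂.freeVars_subset_vars hv)⟩

/-- `(∃v ψ₁) ∨ ψ₂ ≡ ∃v (ψ₁ ∨ ψ₂)` when `v` is free in `ψ₁`
and does not occur in `ψ₂`. -/
theorem ex_or_pull {σ : Signature} {V M : Type} [DecidableEq V]
    (𝕄 : Struc σ M) (ψ₁ ψ₂ : Formula σ V) (v : V)
    (hv1 : v ∈ ψ₁.freeVars) (hv2 : v ∉ ψ₂.vars) (X : Set (V → M)) :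
    TeamSat 𝕄 ((ψ₁.ex v).or ψ₂) X ↔ TeamSat 𝕄 ((ψ₁.or ψ₂).ex v) X :=
  ex_or_pull_general 𝕄 ψ₁ ψ₂ v hv2 X
end

section
/- Over models with at least two elements, for any Team Semantics formulas ψ₁ and ψ₂ and fresh variables q₁, q₂ not occurring in ψ₁ or ψ₂, the formula ψ₁ ∨ ψ₂ is logically equivalent to ∃q₁ ∃q₂ ((q₁ = q₂ ↪ ψ₁) ∧ (q₁ ≠ q₂ ↪ ψ₂)), where θ ↪ φ abbreviates (¬θ) ∨ (θ ∧ φ) for first-order θ. -/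
/-- A (generalized) dependency: an arity together with, for each domain,
a property of relations of that arity (the class of relations satisfying it). -/
structure Dep where
  ar : ℕ
  sem : (M : Type) → Set (Fin ar → M) → Prop

/-- Formulas of `FO(𝒟)`: first-order formulas in NNF possibly containing
dependency atoms `D t̄`. -/
inductive TForm (σ : Signature) (V : Type) : Type 1
  | rel (r : σ.RelSym) (ts : Fin (σ.arity r) → V)
  | nrel (r : σ.RelSym) (ts : Fin (σ.arity r) → V)
  | eq (v w : V)
  | neq (v w : V)
  | and (φ ψ : TForm σ V)
  | or (φ ψ : TForm σ V)
  | ex (v : V) (φ : TForm σ V)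
  | all (v : V) (φ : TForm σ V)
  | dep (d : Dep) (ts : Fin d.ar → V)

/-- All variables occurring in a `TForm`. -/
def TForm.vars {σ : Signature} {V : Type} : TForm σ V → Set V
  | .rel _ ts => Set.range ts
  | .nrel _ ts => Set.range ts
  | .eq v w => {v, w}
  | .neq v w => {v, w}
  | .and φ ψ => φ.vars ∪ ψ.vars
  | .or φ ψ => φ.vars ∪ ψ.vars
  | .ex v φ => insert v φ.vars
  | .all v φ => insert v φ.vars
  | .dep _ ts => Set.range ts

/-- Team Semantics for formulas with dependency atoms.  The dependency atom
`D t̄` holds in `X` iff the relation `X(t̄)` satisfies `D`. -/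
def TTeamSat {σ : Signature} {V M : Type} [DecidableEq V] (𝕄 : Struc σ M) :
    TForm σ V → Set (V → M) → Prop
  | .rel r ts, X => ∀ s ∈ X, 𝕄.interp r (fun i => s (ts i))
  | .nrel r ts, X => ∀ s ∈ X, ¬ 𝕄.interp r (fun i => s (ts i))
  | .eq v w, X => ∀ s ∈ X, s v = s w
  | .neq v w, X => ∀ s ∈ X, s v ≠ s w
  | .and φ ψ, X => TTeamSat 𝕄 φ X ∧ TTeamSat 𝕄 ψ X
  | .or φ ψ, X => ∃ Y Z, X = Y ∪ Z ∧ TTeamSat 𝕄 φ Y ∧ TTeamSat 𝕄 ψ Z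
  | .ex v φ, X => ∃ H : (V → M) → Set M,
      (∀ s ∈ X, (H s).Nonempty) ∧ TTeamSat 𝕄 φ (supplement X H v)
  | .all v φ, X => TTeamSat 𝕄 φ (duplicate X v)
  | .dep d ts, X => d.sem M ((fun s => fun i => s (ts i)) '' X)

/-- The NNF negation of a first-order formula. -/
def Formula.neg {σ : Signature} {V : Type} : Formula σ V → Formula σ V
  | .rel r ts => .nrel r ts
  | .nrel r ts => .rel r ts
  | .eq v w => .neq v w
  | .neq v w => .eq v w
  | .and φ ψ => .or φ.neg ψ.neg
  | .or φ ψ => .and φ.neg ψ.neg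
  | .ex v φ => .all v φ.neg
  | .all v φ => .ex v φ.neg

/-- Embedding of first-order formulas into formulas with dependency atoms. -/
def Formula.toT {σ : Signature} {V : Type} : Formula σ V → TForm σ V
  | .rel r ts => .rel r ts
  | .nrel r ts => .nrel r ts
  | .eq v w => .eq v w
  | .neq v w => .neq v w
  | .and φ ψ => .and φ.toT ψ.toT
  | .or φ ψ => .or φ.toT ψ.toT
  | .ex v φ => .ex v φ.toT
  | .all v φ => .all v φ.toT

/-- The connective `θ ↪ φ`, defined as `(¬θ) ∨ (θ ∧ φ)`. -/
def hook {σ : Signature} {V : Type} (θ : Formula σ V) (φ : TForm σ V) : TForm σ V :=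
  .or θ.neg.toT (.and θ.toT φ)

/-- The restriction `X ↾ θ` of a team to the assignments Tarski-satisfying `θ`. -/
def restrTeam {σ : Signature} {V M : Type} [DecidableEq V] (𝕄 : Struc σ M)
    (X : Set (V → M)) (θ : Formula σ V) : Set (V → M) :=
  {s ∈ X | Tarski 𝕄 θ s}

/-!
The variables `q₁, q₂` act as a selector: a split `X = Y ∪ Z` witnessing `ψ₁ ∨ ψ₂` is encoded
by choosing `q₁ = q₂` on (a copy of) `Y` and `q₁ ≠ q₂` on (a copy of) `Z`, which needs two
distinct elements; conversely the restrictions of the supplemented team to `q₁ = q₂` and to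
`q₁ ≠ q₂` split it, and this split is pulled back to `X`. Both directions rest on locality:
team satisfaction of a formula is invariant under changing the values of variables that do not
occur in it, as long as every assignment of either team has a variant in the other.
-/

open Function Set

section TeamEquiv

variable {V M : Type} {Q R : Set V} {X Y Z X₁ X₂ Y₁ Y₂ : Set (V → M)}

def TeamEquiv (Q : Set V) (X Y : Set (V → M)) : Prop :=
  (∀ s ∈ X, ∃ t ∈ Y, EqOn s t Qᶜ) ∧ (∀ t ∈ Y, ∃ s ∈ X, EqOn s t Qᶜ)

theorem TeamEquiv.symm (h : TeamEquiv Q X Y) : TeamEquiv Q Y X :=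
  ⟨fun t ht => (h.2 t ht).imp fun _ hs => ⟨hs.1, hs.2.symm⟩,
   fun s hs => (h.1 s hs).imp fun _ ht => ⟨ht.1, ht.2.symm⟩⟩

theorem TeamEquiv.trans (hXY : TeamEquiv Q X Y) (hYZ : TeamEquiv R Y Z) :
    TeamEquiv (Q ∪ R) X Z := by
  have hQ : (Q ∪ R)ᶜ ⊆ Qᶜ := compl_subset_compl.mpr subset_union_left
  have hR : (Q ∪ R)ᶜ ⊆ Rᶜ := compl_subset_compl.mpr subset_union_right
  refine ⟨fun s hs => ?_, fun u hu => ?_⟩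
  · obtain ⟨t, ht, hst⟩ := hXY.1 s hs
    obtain ⟨u, hu, htu⟩ := hYZ.1 t ht
    exact ⟨u, hu, (hst.mono hQ).trans (htu.mono hR)⟩
  · obtain ⟨t, ht, htu⟩ := hYZ.2 u hu
    obtain ⟨s, hs, hst⟩ := hXY.2 t ht
    exact ⟨s, hs, (hst.mono hQ).trans (htu.mono hR)⟩

theorem TeamEquiv.union (h₁ : TeamEquiv Q X₁ Y₁) (h₂ : TeamEquiv Q X₂ Y₂) :
    TeamEquiv Q (X₁ ∪ X₂) (Y₁ ∪ Y₂) := by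
  constructor
  · rintro s (hs | hs)
    · obtain ⟨t, ht, hst⟩ := h₁.1 s hs
      exact ⟨t, .inl ht, hst⟩
    · obtain ⟨t, ht, hst⟩ := h₂.1 s hs
      exact ⟨t, .inr ht, hst⟩
  · rintro t (ht | ht)
    · obtain ⟨s, hs, hst⟩ := h₁.2 t ht
      exact ⟨s, .inl hs, hst⟩
    · obtain ⟨s, hs, hst⟩ := h₂.2 t ht
      exact ⟨s, .inr hs, hst⟩

theorem TeamEquiv.exists_union_eq (h : TeamEquiv Q X (Y₁ ∪ Y₂)) :
    ∃ X₁ X₂, X = X₁ ∪ X₂ ∧ TeamEquiv Q X₁ Y₁ ∧ TeamEquiv Q X₂ Y₂ := by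
  refine ⟨{s ∈ X | ∃ t ∈ Y₁, EqOn s t Qᶜ}, {s ∈ X | ∃ t ∈ Y₂, EqOn s t Qᶜ}, ?_,
    ⟨fun s hs => hs.2, fun t ht => ?_⟩, ⟨fun s hs => hs.2, fun t ht => ?_⟩⟩
  · ext s
    constructor
    · intro hs
      obtain ⟨t, ht | ht, hst⟩ := h.1 s hs
      exacts [.inl ⟨hs, t, ht, hst⟩, .inr ⟨hs, t, ht, hst⟩]
    · rintro (⟨hs, -⟩ | ⟨hs, -⟩) <;> exact hs
  · obtain ⟨s, hs, hst⟩ := h.2 t (.inl ht)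
    exact ⟨s, ⟨hs, t, ht, hst⟩, hst⟩
  · obtain ⟨s, hs, hst⟩ := h.2 t (.inr ht)
    exact ⟨s, ⟨hs, t, ht, hst⟩, hst⟩

theorem TeamEquiv.forall_of_forall (hXY : TeamEquiv Q X Y) {P : (V → M) → Prop}
    (hP : ∀ s t, EqOn s t Qᶜ → P s → P t) (h : ∀ s ∈ X, P s) : ∀ t ∈ Y, P t := by
  intro t ht
  obtain ⟨s, hs, hst⟩ := hXY.2 t ht
  exact hP s t hst (h s hs)

theorem TeamEquiv.image_eq {α : Type*} (hXY : TeamEquiv Q X Y) {f : (V → M) → α}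
    (hf : ∀ s t, EqOn s t Qᶜ → f s = f t) : f '' X = f '' Y := by
  apply Subset.antisymm
  · rintro _ ⟨s, hs, rfl⟩
    obtain ⟨t, ht, hst⟩ := hXY.1 s hs
    exact ⟨t, ht, (hf s t hst).symm⟩
  · rintro _ ⟨t, ht, rfl⟩
    obtain ⟨s, hs, hst⟩ := hXY.2 t ht
    exact ⟨s, hs, hf s t hst⟩

theorem teamEquiv_image {f : (V → M) → V → M} (hf : ∀ s, EqOn s (f s) Qᶜ) :
    TeamEquiv Q X (f '' X) :=
  ⟨fun s hs => ⟨f s, mem_image_of_mem f hs, hf s⟩,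
   by rintro _ ⟨s, hs, rfl⟩; exact ⟨s, hs, hf s⟩⟩

end TeamEquiv

section Updates

variable {V M : Type} [DecidableEq V] {Q : Set V} {X Y Z : Set (V → M)} {s t : V → M} {v : V}

theorem Set.EqOn.update (h : EqOn s t Qᶜ) (v : V) (m : M) :
    EqOn (update s v m) (update t v m) Qᶜ := by
  intro w hw
  by_cases hwv : w = v
  · subst hwv
    simp
  · simp [update_of_ne hwv, h hw]

theorem eqOn_update_compl_singleton (s : V → M) (v : V) (m : M) :
    EqOn s (update s v m) {v}ᶜ :=
  fun _ hw => (update_of_ne hw _ _).symm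

theorem eqOn_compl_singleton_iff : EqOn s t {v}ᶜ ↔ t = update s v (t v) := by
  rw [eq_update_iff]
  exact ⟨fun h => ⟨rfl, fun w hw => (h hw).symm⟩, fun h w hw => (h.2 w hw).symm⟩

theorem eqOn_update_of_eqOn_insert (h : EqOn s t (insert v Q)ᶜ) :
    EqOn (update s v (t v)) t Qᶜ := by
  intro w hw
  by_cases hwv : w = v
  · subst hwv
    simp
  · rw [update_of_ne hwv]
    exact h fun hmem => (mem_insert_iff.mp hmem).elim hwv hw

theorem TeamEquiv.duplicate (h : TeamEquiv Q X Y) (v : V) :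
    TeamEquiv Q (duplicate X v) (duplicate Y v) := by
  constructor
  · rintro _ ⟨s, hs, m, rfl⟩
    obtain ⟨t, ht, hst⟩ := h.1 s hs
    exact ⟨update t v m, ⟨t, ht, m, rfl⟩, hst.update v m⟩
  · rintro _ ⟨t, ht, m, rfl⟩
    obtain ⟨s, hs, hst⟩ := h.2 t ht
    exact ⟨update s v m, ⟨s, hs, m, rfl⟩, hst.update v m⟩

theorem TeamEquiv.exists_supplement (h : TeamEquiv Q X Y) {H : (V → M) → Set M}
    (hH : ∀ s ∈ X, (H s).Nonempty) (v : V) :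
    ∃ H' : (V → M) → Set M, (∀ t ∈ Y, (H' t).Nonempty) ∧
      TeamEquiv Q (supplement X H v) (supplement Y H' v) := by
  refine ⟨fun t => {m | ∃ s ∈ X, EqOn s t Qᶜ ∧ m ∈ H s}, fun t ht => ?_, ?_, ?_⟩
  · obtain ⟨s, hs, hst⟩ := h.2 t ht
    obtain ⟨m, hm⟩ := hH s hs
    exact ⟨m, s, hs, hst, hm⟩
  · rintro _ ⟨s, hs, m, hm, rfl⟩
    obtain ⟨t, ht, hst⟩ := h.1 s hs
    exact ⟨update t v m, ⟨t, ht, m, ⟨s, hs, hst, hm⟩, rfl⟩, hst.update v m⟩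
  · rintro _ ⟨t, ht, m, ⟨s, hs, hst, hm⟩, rfl⟩
    exact ⟨update s v m, ⟨s, hs, m, hm, rfl⟩, hst.update v m⟩

theorem TeamEquiv.exists_of_insert (h : TeamEquiv (insert v Q) X Z) :
    ∃ Y, TeamEquiv {v} X Y ∧ TeamEquiv Q Y Z := by
  refine ⟨{y | ∃ s ∈ X, ∃ t ∈ Z, EqOn s t (insert v Q)ᶜ ∧ y = update s v (t v)}, ⟨?_, ?_⟩, ?_, ?_⟩
  · intro s hs
    obtain ⟨t, ht, hst⟩ := h.1 s hs
    exact ⟨_, ⟨s, hs, t, ht, hst, rfl⟩, eqOn_update_compl_singleton s v _⟩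
  · rintro _ ⟨s, hs, t, -, -, rfl⟩
    exact ⟨s, hs, eqOn_update_compl_singleton s v _⟩
  · rintro _ ⟨s, -, t, ht, hst, rfl⟩
    exact ⟨t, ht, eqOn_update_of_eqOn_insert hst⟩
  · intro t ht
    obtain ⟨s, hs, hst⟩ := h.2 t ht
    exact ⟨_, ⟨s, hs, t, ht, hst, rfl⟩, eqOn_update_of_eqOn_insert hst⟩

end Updates

section Semantics

variable {σ : Signature} {V M : Type} [DecidableEq V] (𝕄 : Struc σ M)

theorem tarski_neg (θ : Formula σ V) (s : V → M) : Tarski 𝕄 θ.neg s ↔ ¬ Tarski 𝕄 θ s := by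
  induction θ generalizing s <;> simp [Formula.neg, Tarski, not_or, imp_iff_not_or, *]

theorem tTeamSat_toT_iff (θ : Formula σ V) (X : Set (V → M)) :
    TTeamSat 𝕄 θ.toT X ↔ ∀ s ∈ X, Tarski 𝕄 θ s := by
  induction θ generalizing X with
  | rel | nrel | eq | neq => rfl
  | and φ ψ ihφ ihψ =>
    simp only [Formula.toT, TTeamSat, Tarski, ihφ, ihψ, ← forall₂_and]
  | or φ ψ ihφ ihψ =>
    simp only [Formula.toT, TTeamSat, Tarski, ihφ, ihψ]
    constructor
    · rintro ⟨Y, Z, rfl, hY, hZ⟩ s (hs | hs)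
      exacts [.inl (hY s hs), .inr (hZ s hs)]
    · intro h
      refine ⟨{s ∈ X | Tarski 𝕄 φ s}, {s ∈ X | Tarski 𝕄 ψ s}, ?_, fun s hs => hs.2,
        fun s hs => hs.2⟩
      ext s
      have := h s
      simp only [mem_union, mem_ofPred_eq]
      tauto
  | ex v φ ih =>
    simp only [Formula.toT, TTeamSat, Tarski, ih]
    constructor
    · rintro ⟨H, hH, h⟩ s hs
      obtain ⟨m, hm⟩ := hH s hs
      exact ⟨m, h _ ⟨s, hs, m, hm, rfl⟩⟩
    · intro h
      refine ⟨fun s => {m | Tarski 𝕄 φ (update s v m)}, h, ?_⟩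
      rintro _ ⟨s, -, m, hm, rfl⟩
      exact hm
  | all v φ ih =>
    simp only [Formula.toT, TTeamSat, Tarski, ih]
    exact ⟨fun h s hs m => h _ ⟨s, hs, m, rfl⟩, by rintro h _ ⟨s, hs, m, rfl⟩; exact h s hs m⟩

theorem restrTeam_union_restrTeam_neg (X : Set (V → M)) (θ : Formula σ V) :
    restrTeam 𝕄 X θ ∪ restrTeam 𝕄 X θ.neg = X := by
  ext s
  simp only [restrTeam, tarski_neg, mem_union, mem_ofPred_eq]
  tauto

theorem restrTeam_union_of_forall {θ : Formula σ V} {Y Z : Set (V → M)}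
    (hY : ∀ s ∈ Y, Tarski 𝕄 θ s) (hZ : ∀ s ∈ Z, ¬ Tarski 𝕄 θ s) :
    restrTeam 𝕄 (Y ∪ Z) θ = Y := by
  ext s
  constructor
  · rintro ⟨hs | hs, hθ⟩
    exacts [hs, absurd hθ (hZ s hs)]
  · intro hs
    exact ⟨.inl hs, hY s hs⟩

theorem tTeamSat_hook_iff (θ : Formula σ V) (φ : TForm σ V) (X : Set (V → M)) :
    TTeamSat 𝕄 (hook θ φ) X ↔ TTeamSat 𝕄 φ (restrTeam 𝕄 X θ) := by
  simp only [hook, TTeamSat, tTeamSat_toT_iff, tarski_neg]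
  constructor
  · rintro ⟨Y, Z, rfl, hY, hZθ, hZ⟩
    rwa [union_comm, restrTeam_union_of_forall 𝕄 hZθ hY]
  · intro h
    refine ⟨restrTeam 𝕄 X θ.neg, restrTeam 𝕄 X θ, ?_, fun s hs => ?_, fun s hs => hs.2, h⟩
    · rw [union_comm, restrTeam_union_restrTeam_neg]
    · exact (tarski_neg 𝕄 θ s).mp hs.2

theorem tTeamSat_of_teamEquiv {φ : TForm σ V} {Q : Set V} (hφ : Disjoint φ.vars Q)
    {X Y : Set (V → M)} (hXY : TeamEquiv Q X Y) (h : TTeamSat 𝕄 φ X) : TTeamSat 𝕄 φ Y := by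
  induction φ generalizing X Y with
  | rel r ts | nrel r ts =>
    refine hXY.forall_of_forall (fun s t hst hs => ?_) h
    have : (fun i => s (ts i)) = fun i => t (ts i) :=
      funext fun i => hst (disjoint_left.mp hφ (mem_range_self i))
    exact this ▸ hs
  | eq v w | neq v w =>
    have hv : v ∉ Q := disjoint_left.mp hφ (by simp [TForm.vars])
    have hw : w ∉ Q := disjoint_left.mp hφ (by simp [TForm.vars])
    refine hXY.forall_of_forall (fun s t hst hs => ?_) h
    rwa [← hst hv, ← hst hw]
  | and φ ψ ihφ ihψ =>
    rw [TForm.vars, disjoint_union_left] at hφ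
    exact ⟨ihφ hφ.1 hXY h.1, ihψ hφ.2 hXY h.2⟩
  | or φ ψ ihφ ihψ =>
    rw [TForm.vars, disjoint_union_left] at hφ
    obtain ⟨X₁, X₂, rfl, h₁, h₂⟩ := h
    obtain ⟨Y₁, Y₂, rfl, hY₁, hY₂⟩ := hXY.symm.exists_union_eq
    exact ⟨Y₁, Y₂, rfl, ihφ hφ.1 hY₁.symm h₁, ihψ hφ.2 hY₂.symm h₂⟩
  | ex v φ ih =>
    rw [TForm.vars, disjoint_insert_left] at hφ
    obtain ⟨H, hH, h⟩ := h
    obtain ⟨H', hH', hXY'⟩ := hXY.exists_supplement hH v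
    exact ⟨H', hH', ih hφ.2 hXY' h⟩
  | all v φ ih =>
    rw [TForm.vars, disjoint_insert_left] at hφ
    exact ih hφ.2 (hXY.duplicate v) h
  | dep d ts =>
    have himage := hXY.image_eq (f := fun s i => s (ts i))
      fun s t hst => funext fun i => hst (disjoint_left.mp hφ (mem_range_self i))
    show d.sem M _
    exact himage ▸ h

theorem tTeamSat_ex_iff (v : V) (φ : TForm σ V) (X : Set (V → M)) :
    TTeamSat 𝕄 (.ex v φ) X ↔ ∃ Y, TeamEquiv {v} X Y ∧ TTeamSat 𝕄 φ Y := by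
  constructor
  · rintro ⟨H, hH, h⟩
    refine ⟨_, ⟨fun s hs => ?_, ?_⟩, h⟩
    · obtain ⟨m, hm⟩ := hH s hs
      exact ⟨_, ⟨s, hs, m, hm, rfl⟩, eqOn_update_compl_singleton s v m⟩
    · rintro _ ⟨s, hs, m, -, rfl⟩
      exact ⟨s, hs, eqOn_update_compl_singleton s v m⟩
  · rintro ⟨Y, hXY, h⟩
    refine ⟨fun s => {m | update s v m ∈ Y}, fun s hs => ?_, ?_⟩
    · obtain ⟨t, ht, hst⟩ := hXY.1 s hs
      refine ⟨t v, show update s v (t v) ∈ Y from ?_⟩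
      rwa [← eqOn_compl_singleton_iff.mp hst]
    · convert h
      ext t
      refine ⟨by rintro ⟨s, -, m, hm, rfl⟩; exact hm, fun ht => ?_⟩
      obtain ⟨s, hs, hst⟩ := hXY.2 t ht
      have ht' := eqOn_compl_singleton_iff.mp hst
      exact ⟨s, hs, t v, show update s v (t v) ∈ Y by rwa [← ht'], ht'⟩

theorem tTeamSat_ex_ex_iff (v w : V) (φ : TForm σ V) (X : Set (V → M)) :
    TTeamSat 𝕄 (.ex v (.ex w φ)) X ↔ ∃ Z, TeamEquiv {v, w} X Z ∧ TTeamSat 𝕄 φ Z := by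
  simp only [tTeamSat_ex_iff]
  constructor
  · rintro ⟨Y, hXY, Z, hYZ, hZ⟩
    exact ⟨Z, singleton_union ▸ hXY.trans hYZ, hZ⟩
  · rintro ⟨Z, hXZ, hZ⟩
    obtain ⟨Y, hXY, hYZ⟩ := hXZ.exists_of_insert
    exact ⟨Y, hXY, Z, hYZ, hZ⟩

theorem exists_teamEquiv_restrTeam_eq_neq {q₁ q₂ : V} (hq : q₁ ≠ q₂) {a b : M} (hab : a ≠ b)
    (Y Z : Set (V → M)) :
    ∃ W, TeamEquiv {q₁, q₂} (Y ∪ Z) W ∧ TeamEquiv {q₁, q₂} Y (restrTeam 𝕄 W (.eq q₁ q₂)) ∧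
      TeamEquiv {q₁, q₂} Z (restrTeam 𝕄 W (.neq q₁ q₂)) := by
  let f (c : M) (s : V → M) : V → M := update (update s q₁ a) q₂ c
  have hf (c : M) (s : V → M) : EqOn s (f c s) {q₁, q₂}ᶜ := by
    intro w hw
    simp only [mem_compl_iff, mem_insert_iff, mem_singleton_iff, not_or] at hw
    simp [f, update_of_ne hw.1, update_of_ne hw.2]
  have hfq (c : M) (s : V → M) : f c s q₁ = a ∧ f c s q₂ = c := by
    simp [f, update_of_ne hq]
  have hYeq : ∀ t ∈ f a '' Y, Tarski 𝕄 (.eq q₁ q₂) t := by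
    rintro _ ⟨s, -, rfl⟩
    exact (hfq a s).1.trans (hfq a s).2.symm
  have hZneq : ∀ t ∈ f b '' Z, Tarski 𝕄 (.neq q₁ q₂) t := by
    rintro _ ⟨s, -, rfl⟩
    exact fun h => hab ((hfq b s).1.symm.trans (h.trans (hfq b s).2))
  refine ⟨f a '' Y ∪ f b '' Z, (teamEquiv_image (hf a)).union (teamEquiv_image (hf b)), ?_, ?_⟩
  · rw [restrTeam_union_of_forall 𝕄 hYeq hZneq]
    exact teamEquiv_image (hf a)
  · rw [union_comm, restrTeam_union_of_forall 𝕄 hZneq fun t ht => not_not.mpr (hYeq t ht)]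
    exact teamEquiv_image (hf b)

end Semantics

/-- over models with at least two elements,
`ψ₁ ∨ ψ₂ ≡ ∃q₁ q₂ ((q₁ = q₂ ↪ ψ₁) ∧ (q₁ ≠ q₂ ↪ ψ₂))` for fresh `q₁, q₂`. -/
theorem or_via_hook {σ : Signature} {V M : Type} [DecidableEq V]
    (𝕄 : Struc σ M) (h2 : ∃ a b : M, a ≠ b)
    (ψ₁ ψ₂ : TForm σ V) (q₁ q₂ : V) (hq : q₁ ≠ q₂)
    (hq₁ : q₁ ∉ ψ₁.vars ∪ ψ₂.vars) (hq₂ : q₂ ∉ ψ₁.vars ∪ ψ₂.vars)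
    (X : Set (V → M)) :
    TTeamSat 𝕄 (ψ₁.or ψ₂) X ↔
      TTeamSat 𝕄 (.ex q₁ (.ex q₂
        ((hook (.eq q₁ q₂) ψ₁).and (hook (.neq q₁ q₂) ψ₂)))) X := by
  have hd₁ : Disjoint ψ₁.vars {q₁, q₂} :=
    disjoint_right.mpr <| by rintro _ (rfl | rfl) h; exacts [hq₁ (.inl h), hq₂ (.inl h)]
  have hd₂ : Disjoint ψ₂.vars {q₁, q₂} :=
    disjoint_right.mpr <| by rintro _ (rfl | rfl) h; exacts [hq₁ (.inr h), hq₂ (.inr h)]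
  rw [tTeamSat_ex_ex_iff]
  simp only [TTeamSat, tTeamSat_hook_iff]
  constructor
  · rintro ⟨Y, Z, rfl, hY, hZ⟩
    obtain ⟨a, b, hab⟩ := h2
    obtain ⟨W, hW, hYW, hZW⟩ := exists_teamEquiv_restrTeam_eq_neq 𝕄 hq hab Y Z
    exact ⟨W, hW, tTeamSat_of_teamEquiv 𝕄 hd₁ hYW hY, tTeamSat_of_teamEquiv 𝕄 hd₂ hZW hZ⟩
  · rintro ⟨W, hXW, h₁, h₂⟩
    rw [← restrTeam_union_restrTeam_neg 𝕄 W (.eq q₁ q₂)] at hXW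
    obtain ⟨X₁, X₂, rfl, hX₁, hX₂⟩ := hXW.exists_union_eq
    exact ⟨X₁, X₂, rfl, tTeamSat_of_teamEquiv 𝕄 hd₁ hX₁.symm h₁,
      tTeamSat_of_teamEquiv 𝕄 hd₂ hX₂.symm h₂⟩
end

section
/- For any first-order formula θ and any Team Semantics formula φ, M ⊨_X θ ↪ φ if and only if M ⊨_{X↾θ} φ, where θ ↪ φ is defined as (¬θ) ∨ (θ ∧ φ) with ¬θ the negation normal form of the negation of θ, and X↾θ = {s ∈ X : M ⊨_s θ}. -/
/-!
First-order formulas are flat: they hold in a team iff every assignment of the team satisfies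
them in the Tarskian sense. Hence in a split `X = Y ∪ Z` witnessing `¬θ ∨ (θ ∧ φ)` the part `Z`
consists exactly of the assignments of `X` satisfying `θ`, i.e. `Z = X ↾ θ`; conversely
`X = (X \ X ↾ θ) ∪ X ↾ θ` is such a split as soon as `φ` holds in `X ↾ θ`.
-/

theorem Formula.tarski_neg_iff {σ : Signature} {V M : Type} [DecidableEq V] (𝕄 : Struc σ M)
    (θ : Formula σ V) (s : V → M) : Tarski 𝕄 θ.neg s ↔ ¬ Tarski 𝕄 θ s := by
  induction θ generalizing s with
  | and φ ψ ihφ ihψ => simp only [Formula.neg, Tarski, ihφ, ihψ, not_and_or]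
  | or φ ψ ihφ ihψ => simp only [Formula.neg, Tarski, ihφ, ihψ, not_or]
  | ex v φ ih => simp only [Formula.neg, Tarski, ih, not_exists]
  | all v φ ih => simp only [Formula.neg, Tarski, ih, not_forall]
  | _ => simp [Formula.neg, Tarski]

theorem Set.exists_union_eq_and_forall_iff {α : Type*} (X : Set α) (P Q : α → Prop) :
    (∃ Y Z, X = Y ∪ Z ∧ (∀ s ∈ Y, P s) ∧ ∀ s ∈ Z, Q s) ↔ ∀ s ∈ X, P s ∨ Q s := by
  constructor
  · rintro ⟨Y, Z, rfl, hY, hZ⟩ s (hs | hs)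
    exacts [Or.inl (hY s hs), Or.inr (hZ s hs)]
  · intro h
    refine ⟨{s ∈ X | P s}, {s ∈ X | Q s}, ?_, fun s hs => hs.2, fun s hs => hs.2⟩
    rw [← Set.sep_or, Set.sep_eq_self_iff_mem_true.2 h]

theorem Formula.teamSat_toT_iff {σ : Signature} {V M : Type} [DecidableEq V] (𝕄 : Struc σ M)
    (θ : Formula σ V) (X : Set (V → M)) :
    TTeamSat 𝕄 θ.toT X ↔ ∀ s ∈ X, Tarski 𝕄 θ s := by
  induction θ generalizing X with
  | and φ ψ ihφ ihψ =>
    simp only [Formula.toT, TTeamSat, Tarski, ihφ, ihψ]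
    exact forall₂_and.symm
  | or φ ψ ihφ ihψ =>
    simp only [Formula.toT, TTeamSat, Tarski, ihφ, ihψ]
    exact Set.exists_union_eq_and_forall_iff X _ _
  | ex v φ ih =>
    simp only [Formula.toT, TTeamSat, Tarski, ih]
    constructor
    · rintro ⟨H, hne, hsat⟩ s hs
      obtain ⟨m, hm⟩ := hne s hs
      exact ⟨m, hsat _ ⟨s, hs, m, hm, rfl⟩⟩
    · intro h
      -- supplement each assignment with all of its Tarskian witnesses
      refine ⟨fun s => {m | Tarski 𝕄 φ (Function.update s v m)}, h, ?_⟩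
      rintro t ⟨s, -, m, hm, rfl⟩
      exact hm
  | all v φ ih =>
    simp only [Formula.toT, TTeamSat, Tarski, ih]
    constructor
    · intro h s hs m
      exact h _ ⟨s, hs, m, rfl⟩
    · rintro h t ⟨s, hs, m, rfl⟩
      exact h s hs m
  | _ => simp [Formula.toT, TTeamSat, Tarski]

theorem restrTeam_union_eq {σ : Signature} {V M : Type} [DecidableEq V] {𝕄 : Struc σ M}
    {θ : Formula σ V} {Y Z : Set (V → M)} (hY : ∀ s ∈ Y, ¬ Tarski 𝕄 θ s)
    (hZ : ∀ s ∈ Z, Tarski 𝕄 θ s) : restrTeam 𝕄 (Y ∪ Z) θ = Z := by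
  ext s
  constructor
  · rintro ⟨hs | hs, hθ⟩
    exacts [absurd hθ (hY s hs), hs]
  · intro hs
    exact ⟨Or.inr hs, hZ s hs⟩

/-- `M ⊨_X θ ↪ φ` iff `M ⊨_{X↾θ} φ`. -/
theorem hook_iff_restrict {σ : Signature} {V M : Type} [DecidableEq V]
    (𝕄 : Struc σ M) (θ : Formula σ V) (φ : TForm σ V) (X : Set (V → M)) :
    TTeamSat 𝕄 (hook θ φ) X ↔ TTeamSat 𝕄 φ (restrTeam 𝕄 X θ) := by
  simp only [hook, TTeamSat, Formula.teamSat_toT_iff, Formula.tarski_neg_iff]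
  constructor
  · rintro ⟨Y, Z, rfl, hY, hZ, hφ⟩
    rwa [restrTeam_union_eq hY hZ]
  · intro hφ
    have hX : X = {s ∈ X | ¬ Tarski 𝕄 θ s} ∪ restrTeam 𝕄 X θ := by
      rw [restrTeam, ← Set.sep_or, Set.sep_eq_self_iff_mem_true.2 fun s _ => em' _]
    exact ⟨_, _, hX, fun s hs => hs.2, fun s hs => hs.2, hφ⟩
end
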